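/- arXiv:2103.15139 — 2 statements merged into one kernel-verified Lean document; each statement's English description precedes it below -/
import Mathlib

section
/- Let P be a poset. The following statements are equivalent: (1) (P, σ(P)) is core-compact; (2) (Γ(P), σ(Γ(P))) is core-compact; (3) (Γ(P), σ(Γ(P))) is sober and locally compact; (4) (Γ(P), σ(Γ(P))) is sober and locally compact and σ(Γ(P)) = υ(Γ(P)). -/
open Topology TopologicalSpace Set

/-- `x` is way-below `y`: for every directed set `d` having a least upper bound `a`,
if `y ≤ a` then some element of `d` dominates `x`. -/
def WayBelow {α : Type*} [Preorder α] (x y : α) : Prop :=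
  ∀ d : Set α, d.Nonempty → DirectedOn (· ≤ ·) d → ∀ a : α, IsLUB d a → y ≤ a → ∃ z ∈ d, x ≤ z

/-- A poset is continuous if for every `x` the set of elements way-below `x` is directed
(in particular nonempty) with least upper bound `x`. -/
def ContinuousPoset (α : Type*) [Preorder α] : Prop :=
  ∀ x : α, {d : α | WayBelow d x}.Nonempty ∧ DirectedOn (· ≤ ·) {d : α | WayBelow d x} ∧
    IsLUB {d : α | WayBelow d x} x

/-- A topological space is core-compact if its lattice of open subsets is a continuous
lattice. -/
def CoreCompact (X : Type*) [TopologicalSpace X] : Prop :=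
  ContinuousPoset (TopologicalSpace.Opens X)

/-- The lower Vietoris topology on the lattice of closed subsets of a topological space,
generated by the subbasis of sets `◊U = {A closed | A ∩ U ≠ ∅}` for `U` open. -/
def lowerVietoris (X : Type*) [TopologicalSpace X] :
    TopologicalSpace (TopologicalSpace.Closeds X) :=
  TopologicalSpace.generateFrom
    {S | ∃ U : Set X, IsOpen U ∧ S = {A : TopologicalSpace.Closeds X | ((A : Set X) ∩ U).Nonempty}}

/-!
A locally compact space is core-compact, and `U ↦ ◊U` together with pulling back along
`x ↦ ↓x` makes `Opens P` a Scott-continuous retract of the lattice of Scott-open subsets of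
`Γ(P)`; so continuity of the latter passes to `Opens P`.

Conversely, let `P` be core-compact and `𝒰 ⊆ Γ(P)` Scott-open. Each `A ∈ 𝒰` contains a finite
`F` with `↓F ∈ 𝒰`, and adding the points of `F` one at a time we find opens `V` around them
such that every closed set meeting all the `V` lies in `𝒰`: for `↓x ∪ D ∈ 𝒰` choose
`x ∈ V ≪ {y | ↓y ∪ D ∈ 𝒰}`; by interpolation the condition on `D` is again Scott-open.
Hence `σ(Γ(P)) = υ(Γ(P))`. The lower Vietoris topology is always sober, an irreducible closed
family having its supremum as generic point, and when `P` is core-compact it is locally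
compact: for a Scott-open family `𝔉` of opens of `P`, the closed sets meeting every member of
`𝔉` form a compact set, by an ultrafilter argument.
-/

section Order

variable {α β : Type*} [Preorder α] [Preorder β] {x x' y y' : α}

theorem WayBelow.le (h : WayBelow x y) : x ≤ y := by
  obtain ⟨z, rfl, hxz⟩ :=
    h {y} (singleton_nonempty y) (directedOn_singleton y) y isLUB_singleton le_rfl
  exact hxz

theorem WayBelow.mono_left (hx : x' ≤ x) (h : WayBelow x y) : WayBelow x' y :=
  fun d hd hdir a ha hya => (h d hd hdir a ha hya).imp fun _ ⟨hz, hxz⟩ => ⟨hz, hx.trans hxz⟩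

theorem WayBelow.mono_right (h : WayBelow x y) (hy : y ≤ y') : WayBelow x y' :=
  fun d hd hdir a ha hya => h d hd hdir a ha (hy.trans hya)

theorem isUpperSet_setOf_wayBelow (x : α) : IsUpperSet {y | WayBelow x y} :=
  fun _ _ hy h => WayBelow.mono_right h hy

theorem DirSupInacc.preimage {s : Set β} (hs : DirSupInacc s) {f : α → β}
    (hf : ScottContinuous f) : DirSupInacc (f ⁻¹' s) := fun _ hd hdir _ ha has =>
  image_inter_nonempty_iff.mp (hs (hd.image f) (hdir.mono_comp hf.monotone) (hf hd hdir ha) has)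

theorem ScottContinuous.sup {γ : Type*} [SemilatticeSup γ] {f g : α → γ}
    (hf : ScottContinuous f) (hg : ScottContinuous g) : ScottContinuous fun x => f x ⊔ g x :=
  (hf.prodMk hg).comp ScottContinuous.sup₂

theorem DirSupInacc.exists_finset_sup_mem {γ ι : Type*} [SemilatticeSup γ] [OrderBot γ]
    {s : Set γ} (hs : DirSupInacc s) {f : ι → γ} {t : Set ι} {a : γ} (ha : IsLUB (f '' t) a)
    (has : a ∈ s) : ∃ F : Finset ι, ↑F ⊆ t ∧ F.sup f ∈ s := by
  classical
  let D : Set γ := {b | ∃ F : Finset ι, ↑F ⊆ t ∧ F.sup f = b}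
  have hdir : DirectedOn (· ≤ ·) D := by
    rintro _ ⟨F₁, hF₁, rfl⟩ _ ⟨F₂, hF₂, rfl⟩
    refine ⟨(F₁ ∪ F₂).sup f, ⟨F₁ ∪ F₂, ?_, rfl⟩, Finset.sup_mono Finset.subset_union_left,
      Finset.sup_mono Finset.subset_union_right⟩
    rw [Finset.coe_union]
    exact union_subset hF₁ hF₂
  have hlub : IsLUB D a := by
    refine ⟨?_, fun u hu => ha.2 ?_⟩
    · rintro _ ⟨F, hF, rfl⟩
      exact Finset.sup_le fun i hi => ha.1 ⟨i, hF hi, rfl⟩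
    · rintro _ ⟨i, hi, rfl⟩
      simpa using hu ⟨{i}, by simpa using hi, rfl⟩
  obtain ⟨_, ⟨F, hF, rfl⟩, hFs⟩ := hs (⟨⊥, ∅, by simp, rfl⟩ : D.Nonempty) hdir hlub has
  exact ⟨F, hF, hFs⟩

namespace ContinuousPoset

theorem exists_wayBelow_wayBelow (hα : ContinuousPoset α) (h : WayBelow x y) :
    ∃ b, WayBelow x b ∧ WayBelow b y := by
  let E : Set α := {d | ∃ b, WayBelow d b ∧ WayBelow b y}
  have hE : E.Nonempty := by
    obtain ⟨b, hb⟩ := (hα y).1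
    obtain ⟨d, hd⟩ := (hα b).1
    exact ⟨d, b, hd, hb⟩
  have hdir : DirectedOn (· ≤ ·) E := by
    rintro d₁ ⟨b₁, hd₁, hb₁⟩ d₂ ⟨b₂, hd₂, hb₂⟩
    obtain ⟨b, hb, hb₁b, hb₂b⟩ := (hα y).2.1 b₁ hb₁ b₂ hb₂
    obtain ⟨d, hd, hd₁d, hd₂d⟩ :=
      (hα b).2.1 d₁ (hd₁.mono_right hb₁b) d₂ (hd₂.mono_right hb₂b)
    exact ⟨d, ⟨b, hd, hb⟩, hd₁d, hd₂d⟩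
  have hlub : IsLUB E y := by
    refine ⟨fun d ⟨b, hd, hb⟩ => hd.le.trans hb.le, fun u hu => ?_⟩
    exact (hα y).2.2.2 fun b hb => (hα b).2.2.2 fun d hd => hu ⟨b, hd, hb⟩
  obtain ⟨d, ⟨b, hdb, hby⟩, hxd⟩ := h E hE hdir y hlub le_rfl
  exact ⟨b, hdb.mono_left hxd, hby⟩

theorem dirSupInacc_setOf_wayBelow (hα : ContinuousPoset α) (x : α) :
    DirSupInacc {y | WayBelow x y} := by
  intro d hd hdir a ha hxa
  obtain ⟨b, hxb, hba⟩ := hα.exists_wayBelow_wayBelow hxa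
  obtain ⟨z, hz, hbz⟩ := hba d hd hdir a ha le_rfl
  exact ⟨z, hz, hxb.mono_right hbz⟩

theorem of_exists_directed_isLUB
    (h : ∀ y : α, ∃ T : Set α, T.Nonempty ∧ DirectedOn (· ≤ ·) T ∧ IsLUB T y ∧
      ∀ t ∈ T, WayBelow t y) : ContinuousPoset α := by
  intro y
  obtain ⟨T, hT, hdir, hlub, hwb⟩ := h y
  refine ⟨hT.imp hwb, ?_, fun d hd => hd.le, fun u hu => hlub.2 fun t ht => hu (hwb t ht)⟩
  intro c₁ hc₁ c₂ hc₂
  obtain ⟨t₁, ht₁, hc₁t⟩ := hc₁ T hT hdir y hlub le_rfl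
  obtain ⟨t₂, ht₂, hc₂t⟩ := hc₂ T hT hdir y hlub le_rfl
  obtain ⟨t, ht, ht₁t, ht₂t⟩ := hdir t₁ ht₁ t₂ ht₂
  exact ⟨t, hwb t ht, hc₁t.trans ht₁t, hc₂t.trans ht₂t⟩

theorem of_retract (hα : ContinuousPoset α) {s : β → α} {r : α → β} (hs : ScottContinuous s)
    (hr : ScottContinuous r) (hrs : ∀ y, r (s y) = y) : ContinuousPoset β := by
  refine of_exists_directed_isLUB fun y => ⟨r '' {b | WayBelow b (s y)}, (hα (s y)).1.image r,
    (hα (s y)).2.1.mono_comp hr.monotone, ?_, ?_⟩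
  · simpa only [hrs] using hr (hα (s y)).1 (hα (s y)).2.1 (hα (s y)).2.2
  · rintro _ ⟨b, hb, rfl⟩ d hd hdir a ha hya
    obtain ⟨_, ⟨z, hz, rfl⟩, hbz⟩ := hb (s '' d) (hd.image s) (hdir.mono_comp hs.monotone) (s a)
      (hs hd hdir ha) (hs.monotone hya)
    exact ⟨z, hz, hrs z ▸ hr.monotone hbz⟩

end ContinuousPoset

end Order

section CoreCompact

variable {X : Type*} [TopologicalSpace X]

theorem TopologicalSpace.Opens.isLUB_iff_mem {d : Set (Opens X)} {a : Opens X} :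
    IsLUB d a ↔ ∀ x, x ∈ a ↔ ∃ U ∈ d, x ∈ U := by
  rw [isLUB_iff_sSup_eq, eq_comm, SetLike.ext_iff]
  simp only [Opens.mem_sSup]

theorem CoreCompact.exists_wayBelow_mem (hX : CoreCompact X) {U : Opens X} {x : X}
    (hx : x ∈ U) : ∃ V : Opens X, WayBelow V U ∧ x ∈ V :=
  (Opens.isLUB_iff_mem.mp (hX U).2.2 x).mp hx

theorem wayBelow_of_subset_isCompact_subset {U V : Opens X} {K : Set X} (hK : IsCompact K)
    (hUK : (U : Set X) ⊆ K) (hKV : K ⊆ V) : WayBelow U V := by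
  intro d hd hdir a ha hVa
  have : Nonempty d := hd.to_subtype
  have hKd : K ⊆ ⋃ W : d, (W : Set X) := fun x hx => by
    simpa using (Opens.isLUB_iff_mem.mp ha x).mp (hVa (hKV hx))
  obtain ⟨W, hKW⟩ := hK.elim_directed_cover _ (fun W : d => (W : Opens X).isOpen) hKd
    (directedOn_iff_directed.mp hdir)
  exact ⟨W, W.2, hUK.trans hKW⟩

theorem coreCompact_of_locallyCompactSpace [LocallyCompactSpace X] : CoreCompact X := by
  refine ContinuousPoset.of_exists_directed_isLUB fun V =>
    ⟨{U | ∃ K, IsCompact K ∧ (U : Set X) ⊆ K ∧ K ⊆ V}, ⟨⊥, ∅, isCompact_empty, by simp, by simp⟩,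
      ?_, ?_, fun U ⟨K, hK, hUK, hKV⟩ => wayBelow_of_subset_isCompact_subset hK hUK hKV⟩
  · rintro U₁ ⟨K₁, hK₁, hUK₁, hKV₁⟩ U₂ ⟨K₂, hK₂, hUK₂, hKV₂⟩
    exact ⟨U₁ ⊔ U₂, ⟨K₁ ∪ K₂, hK₁.union hK₂, union_subset_union hUK₁ hUK₂,
      union_subset hKV₁ hKV₂⟩, le_sup_left, le_sup_right⟩
  · refine Opens.isLUB_iff_mem.mpr fun x =>
      ⟨fun hx => ?_, fun ⟨U, ⟨K, _, hUK, hKV⟩, hx⟩ => hKV (hUK hx)⟩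
    obtain ⟨K, hK, hKV, hKc⟩ := local_compact_nhds (V.isOpen.mem_nhds hx)
    exact ⟨⟨interior K, isOpen_interior⟩, ⟨K, hKc, interior_subset, hKV⟩,
      mem_interior_iff_mem_nhds.mpr hK⟩

end CoreCompact

section LowerVietoris

variable {X : Type*} [TopologicalSpace X]

def diamond (U : Set X) : Set (Closeds X) :=
  {A | ((A : Set X) ∩ U).Nonempty}

def meetsAll (𝔉 : Set (Opens X)) : Set (Closeds X) :=
  ⋂ W ∈ 𝔉, diamond (W : Set X)

theorem diamond_mono {U V : Set X} (h : U ⊆ V) : diamond U ⊆ diamond V :=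
  fun _ ⟨x, hxA, hxU⟩ => ⟨x, hxA, h hxU⟩

theorem isUpperSet_diamond (U : Set X) : IsUpperSet (diamond U) :=
  fun _ _ hAB ⟨x, hxA, hxU⟩ => ⟨x, hAB hxA, hxU⟩

theorem sSup_mem_diamond_iff {U : Set X} (hU : IsOpen U) {S : Set (Closeds X)} :
    sSup S ∈ diamond U ↔ ∃ A ∈ S, A ∈ diamond U := by
  simp only [diamond, mem_ofPred_eq, Closeds.coe_sSup, closure_inter_open_nonempty_iff hU,
    sUnion_image, iUnion_inter, nonempty_iUnion, exists_prop]

theorem isOpen_diamond {U : Set X} (hU : IsOpen U) : IsOpen[lowerVietoris X] (diamond U) :=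
  GenerateOpen.basic _ ⟨U, hU, rfl⟩

theorem meetsAll_subset_meetsAll {𝔉 𝔊 : Set (Opens X)} (h : ∀ W ∈ 𝔊, ∃ V ∈ 𝔉, V ≤ W) :
    meetsAll 𝔉 ⊆ meetsAll 𝔊 := by
  refine fun A hA => mem_iInter₂.mpr fun W hW => ?_
  obtain ⟨V, hV, hVW⟩ := h W hW
  exact diamond_mono hVW (mem_iInter₂.mp hA V hV)

theorem isUpperSet_meetsAll (𝔉 : Set (Opens X)) : IsUpperSet (meetsAll 𝔉) :=
  isUpperSet_iInter₂ fun W _ => isUpperSet_diamond (W : Set X)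

theorem isOpen_meetsAll (F : Finset (Opens X)) :
    IsOpen[lowerVietoris X] (meetsAll (F : Set (Opens X))) :=
  @isOpen_biInter_finset _ _ (lowerVietoris X) _ _ fun W _ => isOpen_diamond W.isOpen

theorem exists_meetsAll_subset {O : Set (Closeds X)} (hO : IsOpen[lowerVietoris X] O)
    {A : Closeds X} (hA : A ∈ O) :
    ∃ F : Finset (Opens X), A ∈ meetsAll (F : Set (Opens X)) ∧ meetsAll ↑F ⊆ O := by
  classical
  induction hO generalizing A with
  | basic _ h =>
    obtain ⟨U, hU, rfl⟩ := h
    exact ⟨{⟨U, hU⟩}, by simpa [meetsAll, diamond] using hA, by simp [meetsAll, diamond]⟩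
  | univ => exact ⟨∅, by simp [meetsAll], subset_univ _⟩
  | inter _ _ _ _ ih₁ ih₂ =>
    obtain ⟨F₁, hA₁, hF₁⟩ := ih₁ hA.1
    obtain ⟨F₂, hA₂, hF₂⟩ := ih₂ hA.2
    have h : meetsAll ↑(F₁ ∪ F₂) = meetsAll ↑F₁ ∩ meetsAll (F₂ : Set (Opens X)) := by
      simp only [meetsAll, Finset.coe_union, biInter_union]
    exact ⟨F₁ ∪ F₂, h ▸ ⟨hA₁, hA₂⟩, h ▸ inter_subset_inter hF₁ hF₂⟩
  | sUnion _ _ ih =>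
    obtain ⟨s, hs, hAs⟩ := hA
    obtain ⟨F, hAF, hFs⟩ := ih s hs hAs
    exact ⟨F, hAF, hFs.trans (subset_sUnion_of_mem hs)⟩

theorem isUpperSet_of_isOpen_lowerVietoris {O : Set (Closeds X)}
    (hO : IsOpen[lowerVietoris X] O) : IsUpperSet O := fun _ _ hAB hA => by
  obtain ⟨F, hAF, hFO⟩ := exists_meetsAll_subset hO hA
  exact hFO (isUpperSet_meetsAll _ hAB hAF)

theorem closure_singleton_lowerVietoris (C : Closeds X) :
    closure[lowerVietoris X] {C} = Iic C := by
  let := lowerVietoris X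
  refine Subset.antisymm (closure_minimal (by simp) ?_) fun B hBC => ?_
  · have : (Iic C)ᶜ = diamond (C : Set X)ᶜ := by
      ext B
      simp only [mem_compl_iff, mem_Iic, diamond, mem_ofPred_eq, inter_compl_nonempty_iff]
      rfl
    exact isOpen_compl_iff.mp (this ▸ isOpen_diamond C.isClosed.isOpen_compl)
  · exact mem_closure_iff.mpr fun O hO hBO =>
      ⟨C, isUpperSet_of_isOpen_lowerVietoris hO hBC hBO, rfl⟩

theorem quasiSober_lowerVietoris : @QuasiSober (Closeds X) (lowerVietoris X) := by
  let := lowerVietoris X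
  refine ⟨fun {S} hS hSc => ⟨sSup S, ?_⟩⟩
  have hsup : sSup S ∈ S := by
    by_contra hnot
    obtain ⟨F, hF, hFS⟩ := exists_meetsAll_subset hSc.isOpen_compl hnot
    have hmeet : (S ∩ ⋂₀ ↑(F.image fun W : Opens X => diamond (W : Set X))).Nonempty := by
      refine isIrreducible_iff_sInter.mp hS _ ?_ ?_ <;> simp only [Finset.mem_image]
      · rintro _ ⟨W, -, rfl⟩
        exact isOpen_diamond W.isOpen
      · rintro _ ⟨W, hW, rfl⟩
        obtain ⟨A, hA, hAW⟩ := (sSup_mem_diamond_iff W.isOpen).mp (mem_iInter₂.mp hF W hW)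
        exact ⟨A, hA, hAW⟩
    obtain ⟨A, hAS, hA⟩ := hmeet
    refine hFS ?_ hAS
    simpa [meetsAll] using hA
  rw [IsGenericPoint, closure_singleton_lowerVietoris]
  refine Subset.antisymm (fun B hB => ?_) fun B hB => le_sSup hB
  exact isUpperSet_compl.mp (isUpperSet_of_isOpen_lowerVietoris hSc.isOpen_compl) hB hsup

theorem isCompact_meetsAll {𝔉 : Set (Opens X)} (hup : IsUpperSet 𝔉) (hinacc : DirSupInacc 𝔉) :
    @IsCompact _ (lowerVietoris X) (meetsAll 𝔉) := by
  let := lowerVietoris X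
  rw [isCompact_iff_ultrafilter_le_nhds]
  intro 𝒰 h𝒰
  -- the limit point is the complement of the union of all `U` with `diamond U ∉ 𝒰`
  let 𝒮 : Set (Opens X) := {U | diamond (U : Set X) ∉ 𝒰}
  let A : Closeds X := (sSup 𝒮).compl
  have hA : A ∈ meetsAll 𝔉 := by
    refine mem_iInter₂.mpr fun W hW => not_not.mp fun hAW => ?_
    have hW𝒮 : W ≤ sSup 𝒮 := fun x hx => not_not.mp fun hx𝒮 => hAW ⟨x, hx𝒮, hx⟩
    obtain ⟨F, hF𝒮, hF⟩ :=
      hinacc.exists_finset_sup_mem (f := id) (by simpa using isLUB_sSup 𝒮) (hup hW𝒮 hW)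
    have hsub : meetsAll 𝔉 ⊆ ⋃ U ∈ F, diamond (U : Set X) := fun B hB => by
      obtain ⟨x, hxB, hxF⟩ := mem_iInter₂.mp hB _ hF
      obtain ⟨U, hU, hxU⟩ := Opens.mem_sSup.mp (Finset.sup_id_eq_sSup F ▸ hxF)
      exact mem_iUnion₂.mpr ⟨U, hU, x, hxB, hxU⟩
    obtain ⟨U, hU, hU𝒰⟩ :=
      (Ultrafilter.finite_biUnion_mem_iff F.finite_toSet).mp
        (𝒰.mem_of_superset (Filter.le_principal_iff.mp h𝒰) hsub)
    exact hF𝒮 hU hU𝒰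
  refine ⟨A, hA, ?_⟩
  rw [show 𝓝 A = _ from nhds_generateFrom]
  refine le_iInf₂ fun _ ⟨hAs, U, hU, hs⟩ => ?_
  subst hs
  refine Filter.le_principal_iff.mpr (not_not.mp fun hU𝒰 => ?_)
  obtain ⟨x, hxA, hxU⟩ := hAs
  exact hxA (Opens.mem_sSup.mpr ⟨⟨U, hU⟩, hU𝒰, hxU⟩)

theorem locallyCompactSpace_lowerVietoris (hX : CoreCompact X) :
    @LocallyCompactSpace (Closeds X) (lowerVietoris X) := by
  classical
  let := lowerVietoris X
  refine ⟨fun A n hn => ?_⟩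
  obtain ⟨O, hOn, hO, hAO⟩ := mem_nhds_iff.mp hn
  obtain ⟨F, hAF, hFO⟩ := exists_meetsAll_subset hO hAO
  have hV : ∀ U ∈ F, ∃ V : Opens X, WayBelow V U ∧ A ∈ diamond (V : Set X) := fun U hU => by
    obtain ⟨x, hxA, hxU⟩ := mem_iInter₂.mp hAF U hU
    obtain ⟨V, hVU, hxV⟩ := hX.exists_wayBelow_mem hxU
    exact ⟨V, hVU, x, hxA, hxV⟩
  choose! V hVU hAV using hV
  let 𝔉 : Set (Opens X) := ⋃ U ∈ F, {W | WayBelow (V U) W}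
  have hup : IsUpperSet 𝔉 := isUpperSet_iUnion₂ fun U _ => isUpperSet_setOf_wayBelow (V U)
  have hinacc : DirSupInacc 𝔉 :=
    DirSupInacc.iUnion fun U => DirSupInacc.iUnion fun _ => hX.dirSupInacc_setOf_wayBelow (V U)
  refine ⟨meetsAll 𝔉, ?_, ?_, isCompact_meetsAll hup hinacc⟩
  · have hsub : meetsAll ↑(F.image V) ⊆ meetsAll 𝔉 := meetsAll_subset_meetsAll fun W hW => by
      obtain ⟨U, hU, hUW⟩ := mem_iUnion₂.mp hW
      exact ⟨V U, Finset.mem_coe.mpr (Finset.mem_image_of_mem V hU), hUW.le⟩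
    refine Filter.mem_of_superset ((isOpen_meetsAll _).mem_nhds ?_) hsub
    simpa [meetsAll] using hAV
  · refine Subset.trans (meetsAll_subset_meetsAll fun U hU => ⟨U, ?_, le_rfl⟩) (hFO.trans hOn)
    exact mem_iUnion₂.mpr ⟨U, hU, hVU U hU⟩

end LowerVietoris

theorem isOpen_scott_iff {α : Type*} [Preorder α] {s : Set α} :
    IsOpen[scott α univ] s ↔ IsUpperSet s ∧ DirSupInacc s := by
  let := scott α univ
  have : IsScott α univ := ⟨rfl⟩
  rw [IsScott.isOpen_iff_isUpperSet_and_dirSupInaccOn (D := univ), dirSupInaccOn_univ]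

theorem t0Space_scott (α : Type*) [PartialOrder α] : @T0Space α (scott α univ) :=
  let := scott α univ
  have : IsScott α univ := ⟨rfl⟩
  inferInstance

theorem scott_closeds_le_lowerVietoris (X : Type*) [TopologicalSpace X] :
    scott (Closeds X) univ ≤ lowerVietoris X := by
  refine le_generateFrom fun _ ⟨U, hU, h⟩ => h ▸ isOpen_scott_iff.mpr ⟨isUpperSet_diamond U, ?_⟩
  intro d _ _ a ha haU
  exact (sSup_mem_diamond_iff hU).mp (ha.sSup_eq ▸ haU)

section ScottClosedSets

variable {P : Type*} [Preorder P] [TopologicalSpace P] [IsScott P univ] {𝒰 : Set (Closeds P)}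

theorem ScottContinuous.isOpen_preimage {α : Type*} [Preorder α] {f : P → α}
    (hf : ScottContinuous f) {s : Set α} (hs : IsOpen[scott α univ] s) : IsOpen (f ⁻¹' s) := by
  rw [IsScott.isOpen_iff_isUpperSet_and_dirSupInaccOn (D := univ), dirSupInaccOn_univ]
  exact ⟨(isOpen_scott_iff.mp hs).1.preimage hf.monotone, (isOpen_scott_iff.mp hs).2.preimage hf⟩

def closedIic (x : P) : Closeds P :=
  ⟨Iic x, isClosed_Iic⟩

theorem closedIic_le_iff {x : P} {A : Closeds P} : closedIic x ≤ A ↔ x ∈ A :=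
  ⟨fun h => h le_rfl, fun hx _ hy => IsScott.isLowerSet_of_isClosed A.isClosed hy hx⟩

theorem isLUB_closedIic_image (A : Closeds P) : IsLUB (closedIic '' A) A :=
  ⟨fun _ ⟨_, hx, h⟩ => h ▸ closedIic_le_iff.mpr hx,
    fun _ hB x hx => closedIic_le_iff.mp (hB ⟨x, hx, rfl⟩)⟩

theorem scottContinuous_closedIic : ScottContinuous (closedIic : P → Closeds P) := by
  refine fun d hd hdir a ha => ⟨?_, fun B hB => closedIic_le_iff.mpr ?_⟩
  · rintro _ ⟨x, hx, rfl⟩ y hy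
    exact le_trans hy (ha.1 hx)
  · exact IsScott.dirSupClosed_of_isClosed B.isClosed (fun x hx => closedIic_le_iff.mp
      (hB ⟨x, hx, rfl⟩)) hd hdir ha

theorem closedIic_preimage_diamond {U : Set P} (hU : IsUpperSet U) :
    closedIic ⁻¹' diamond U = U :=
  Subset.antisymm (fun _ ⟨_, hyx, hyU⟩ => hU hyx hyU) fun x hx => ⟨x, le_rfl, hx⟩

theorem CoreCompact.of_scott_closeds
    (h : @CoreCompact (Closeds P) (scott (Closeds P) univ)) : CoreCompact P := by
  let := scott (Closeds P) univ
  let s : Opens P → Opens (Closeds P) := fun U =>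
    ⟨diamond (U : Set P), scott_closeds_le_lowerVietoris P _ (isOpen_diamond U.isOpen)⟩
  have hs : ScottContinuous s := ScottContinuous.of_map_sSup fun d _ _ => by
    ext A
    constructor
    · rintro ⟨x, hxA, hx⟩
      obtain ⟨U, hU, hxU⟩ := Opens.mem_sSup.mp hx
      exact Opens.mem_sSup.mpr ⟨s U, ⟨U, hU, rfl⟩, x, hxA, hxU⟩
    · intro hA
      obtain ⟨_, ⟨U, hU, rfl⟩, x, hxA, hxU⟩ := Opens.mem_sSup.mp hA
      exact ⟨x, hxA, Opens.mem_sSup.mpr ⟨U, hU, hxU⟩⟩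
  let r := Opens.comap
    ⟨(closedIic : P → Closeds P),
      continuous_def.mpr fun _ => scottContinuous_closedIic.isOpen_preimage⟩
  exact ContinuousPoset.of_retract h hs (ScottContinuous.of_map_sSup fun d _ _ => map_sSup r d)
    fun U => Opens.ext <|
      closedIic_preimage_diamond (IsScott.isUpperSet_of_isOpen (D := univ) U.isOpen)

def slice (h𝒰 : IsOpen[scott (Closeds P) univ] 𝒰) (D : Closeds P) : Opens P :=
  ⟨(fun x => closedIic x ⊔ D) ⁻¹' 𝒰,
    (scottContinuous_closedIic.sup (.const D)).isOpen_preimage h𝒰⟩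

theorem scottContinuous_slice (h𝒰 : IsOpen[scott (Closeds P) univ] 𝒰) :
    ScottContinuous (slice h𝒰) := by
  intro d hd hdir S hS
  refine Opens.isLUB_iff_mem.mpr fun x => ⟨fun hx => ?_, ?_⟩
  · have hsup : ScottContinuous (closedIic x ⊔ · : Closeds P → Closeds P) :=
      (ScottContinuous.const _).sup ScottContinuous.id
    obtain ⟨_, ⟨D, hD, rfl⟩, hxD⟩ := (isOpen_scott_iff.mp h𝒰).2 (hd.image _)
      (hdir.mono_comp hsup.monotone) (hsup hd hdir hS) hx
    exact ⟨slice h𝒰 D, ⟨D, hD, rfl⟩, hxD⟩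
  · rintro ⟨_, ⟨D, hD, rfl⟩, hxD⟩
    exact (isOpen_scott_iff.mp h𝒰).1 (sup_le_sup_left (hS.1 hD) _) hxD

theorem exists_isOpen_lowerVietoris_of_finset_sup_mem (hP : CoreCompact P)
    (h𝒰 : IsOpen[scott (Closeds P) univ] 𝒰) (F : Finset P) (hF : F.sup closedIic ∈ 𝒰) :
    ∃ O, IsOpen[lowerVietoris P] O ∧ F.sup closedIic ∈ O ∧ O ⊆ 𝒰 := by
  classical
  induction F using Finset.induction_on generalizing 𝒰 with
  | empty =>
    exact ⟨univ, @isOpen_univ _ (lowerVietoris P), mem_univ _,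
      fun _ _ => (isOpen_scott_iff.mp h𝒰).1 bot_le hF⟩
  | insert x F _ ih =>
    rw [Finset.sup_insert] at hF ⊢
    obtain ⟨V, hV, hxV⟩ := hP.exists_wayBelow_mem (U := slice h𝒰 (F.sup closedIic)) hF
    have h𝒲 : IsOpen[scott (Closeds P) univ] {C | WayBelow V (slice h𝒰 C)} :=
      isOpen_scott_iff.mpr
        ⟨(isUpperSet_setOf_wayBelow V).preimage (scottContinuous_slice h𝒰).monotone,
          (hP.dirSupInacc_setOf_wayBelow V).preimage (scottContinuous_slice h𝒰)⟩
    obtain ⟨O, hO, hFO, hO𝒲⟩ := ih h𝒲 hV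
    refine ⟨O ∩ diamond V, @IsOpen.inter _ (lowerVietoris P) _ _ hO (isOpen_diamond V.isOpen),
      ⟨isUpperSet_of_isOpen_lowerVietoris hO le_sup_right hFO,
        x, (le_sup_left : closedIic x ≤ _) le_rfl, hxV⟩, ?_⟩
    rintro B ⟨hBO, y, hyB, hyV⟩
    have hy : closedIic y ⊔ B ∈ 𝒰 := (hO𝒲 hBO).le hyV
    rwa [sup_eq_right.mpr (closedIic_le_iff.mpr hyB)] at hy

theorem lowerVietoris_le_scott_closeds (hP : CoreCompact P) :
    lowerVietoris P ≤ scott (Closeds P) univ := by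
  let := lowerVietoris P
  refine TopologicalSpace.le_def.mpr fun 𝒰 h𝒰 => isOpen_iff_forall_mem_open.mpr fun A hA => ?_
  obtain ⟨F, hFA, hF⟩ :=
    (isOpen_scott_iff.mp h𝒰).2.exists_finset_sup_mem (isLUB_closedIic_image A) hA
  obtain ⟨O, hO, hFO, hO𝒰⟩ := exists_isOpen_lowerVietoris_of_finset_sup_mem hP h𝒰 F hF
  exact ⟨O, hO𝒰, hO, isUpperSet_of_isOpen_lowerVietoris hO
    (Finset.sup_le fun x hx => closedIic_le_iff.mpr (hFA hx)) hFO⟩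

theorem scott_closeds_eq_lowerVietoris (hP : CoreCompact P) :
    scott (Closeds P) univ = lowerVietoris P :=
  le_antisymm (scott_closeds_le_lowerVietoris P) (lowerVietoris_le_scott_closeds hP)

theorem quasiSober_scott_closeds (hP : CoreCompact P) :
    @QuasiSober (Closeds P) (scott (Closeds P) univ) := by
  rw [scott_closeds_eq_lowerVietoris hP]
  exact quasiSober_lowerVietoris

theorem locallyCompactSpace_scott_closeds (hP : CoreCompact P) :
    @LocallyCompactSpace (Closeds P) (scott (Closeds P) univ) := by
  rw [scott_closeds_eq_lowerVietoris hP]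
  exact locallyCompactSpace_lowerVietoris hP

end ScottClosedSets

/-- For a poset `P` the following are equivalent:
(1) `(P, σ(P))` is core-compact;
(2) `(Γ(P), σ(Γ(P)))` is core-compact;
(3) `(Γ(P), σ(Γ(P)))` is sober and locally compact;
(4) `(Γ(P), σ(Γ(P)))` is sober and locally compact and `σ(Γ(P)) = υ(Γ(P))`. -/
theorem coreCompact_tfae
    {P : Type*} [PartialOrder P] [TopologicalSpace P] [Topology.IsScott P Set.univ] :
    (CoreCompact P ↔
      @CoreCompact (TopologicalSpace.Closeds P)
        (Topology.scott (TopologicalSpace.Closeds P) Set.univ)) ∧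
    (@CoreCompact (TopologicalSpace.Closeds P)
        (Topology.scott (TopologicalSpace.Closeds P) Set.univ) ↔
      (@T0Space (TopologicalSpace.Closeds P)
          (Topology.scott (TopologicalSpace.Closeds P) Set.univ) ∧
        @QuasiSober (TopologicalSpace.Closeds P)
          (Topology.scott (TopologicalSpace.Closeds P) Set.univ) ∧
        @LocallyCompactSpace (TopologicalSpace.Closeds P)
          (Topology.scott (TopologicalSpace.Closeds P) Set.univ))) ∧
    ((@T0Space (TopologicalSpace.Closeds P)
          (Topology.scott (TopologicalSpace.Closeds P) Set.univ) ∧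
        @QuasiSober (TopologicalSpace.Closeds P)
          (Topology.scott (TopologicalSpace.Closeds P) Set.univ) ∧
        @LocallyCompactSpace (TopologicalSpace.Closeds P)
          (Topology.scott (TopologicalSpace.Closeds P) Set.univ)) ↔
      (@T0Space (TopologicalSpace.Closeds P)
          (Topology.scott (TopologicalSpace.Closeds P) Set.univ) ∧
        @QuasiSober (TopologicalSpace.Closeds P)
          (Topology.scott (TopologicalSpace.Closeds P) Set.univ) ∧
        @LocallyCompactSpace (TopologicalSpace.Closeds P)
          (Topology.scott (TopologicalSpace.Closeds P) Set.univ) ∧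
        Topology.scott (TopologicalSpace.Closeds P) Set.univ = lowerVietoris P)) := by
  have hT0 := t0Space_scott (Closeds P)
  have h14 (hP : CoreCompact P) :=
    And.intro (quasiSober_scott_closeds hP) <|
      And.intro (locallyCompactSpace_scott_closeds hP) (scott_closeds_eq_lowerVietoris hP)
  have h32 : @LocallyCompactSpace _ (scott (Closeds P) univ) → @CoreCompact _ (scott _ univ) :=
    @coreCompact_of_locallyCompactSpace _ (scott _ univ)
  have h21 := CoreCompact.of_scott_closeds (P := P)
  exact ⟨⟨fun hP => h32 (h14 hP).2.1, h21⟩,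
    ⟨fun hΓ => ⟨hT0, (h14 (h21 hΓ)).1, (h14 (h21 hΓ)).2.1⟩, fun h => h32 h.2.2⟩,
    ⟨fun h => ⟨h.1, h.2.1, h.2.2, (h14 (h21 (h32 h.2.2))).2.2⟩, fun h => ⟨h.1, h.2.1, h.2.2.1⟩⟩⟩
end

section
/- Let P be a poset. Then P is a continuous poset if and only if the complete lattice Γ(P) of Scott closed subsets of P (ordered by inclusion) is a continuous lattice. -/
open Topology TopologicalSpace Set

/-!
Write `↓x` for the principal ideal of `x`, a Scott closed set. If `P` is continuous and
`w ≪ x ∈ C`, interpolate `w ≪ v ≪ x`: the Scott open set `{y | v ≪ y}` contains `x`, so it meets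
any family of closed sets whose closed union contains `C`, and hence `↓w ≪ C`; every `C` is then
the supremum of these `↓w`, because Scott closed sets are closed under directed suprema.

Conversely, if `Γ(P)` is continuous, let `G = {g | ↓g ≪ ↓x}`. Since a directed supremum lies in
the closure of the union of the corresponding principal ideals, `g ∈ G` is way below `x`. By
interpolation in `Γ(P)` and compactness of the way-below relation against finite unions, every
closed set way below `↓x` is covered by `⋃_{g ∈ G} ↓g`, so `x` lies in its closure. This forces
`sup G = x`, and also directedness: if `g₁, g₂ ∈ G` had no common upper bound in `G`, then `G`
would split into the elements not above `g₁` and those not above `g₂`, and `x` would lie in the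
closure of one of the two halves, contradicting `↓gᵢ ≪ ↓x`.
-/

section WayBelow

variable {α : Type*}

section Preorder

variable [Preorder α] {a b : α}

lemma WayBelow.le_s10 (h : WayBelow a b) : a ≤ b := by
  obtain ⟨z, rfl, haz⟩ :=
    h {b} (singleton_nonempty b) (directedOn_singleton b) b isLUB_singleton le_rfl
  exact haz

lemma WayBelow.mono {a' b' : α} (ha : a' ≤ a) (hb : b ≤ b') (h : WayBelow a b) :
    WayBelow a' b' := fun d hd hdir s hs hbs =>
  let ⟨z, hz, haz⟩ := h d hd hdir s hs (hb.trans hbs)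
  ⟨z, hz, ha.trans haz⟩

lemma ContinuousPoset.exists_wayBelow_wayBelow_s10 (hα : ContinuousPoset α) {a c : α}
    (h : WayBelow a c) : ∃ b, WayBelow a b ∧ WayBelow b c := by
  set D : Set α := {v | ∃ u, WayBelow v u ∧ WayBelow u c}
  have hD : D.Nonempty := by
    obtain ⟨u, hu⟩ := (hα c).1
    obtain ⟨v, hv⟩ := (hα u).1
    exact ⟨v, u, hv, hu⟩
  have hDdir : DirectedOn (· ≤ ·) D := by
    rintro v₁ ⟨u₁, hv₁, hu₁⟩ v₂ ⟨u₂, hv₂, hu₂⟩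
    obtain ⟨u, hu, hu₁u, hu₂u⟩ := (hα c).2.1 u₁ hu₁ u₂ hu₂
    obtain ⟨v, hv, hv₁v, hv₂v⟩ :=
      (hα u).2.1 v₁ (hv₁.mono le_rfl hu₁u) v₂ (hv₂.mono le_rfl hu₂u)
    exact ⟨v, ⟨u, hv, hu⟩, hv₁v, hv₂v⟩
  have hDlub : IsLUB D c := by
    refine ⟨fun v ⟨u, hv, hu⟩ => hv.le_s10.trans hu.le_s10, fun b hb => ?_⟩
    exact (hα c).2.2.2 fun u hu => (hα u).2.2.2 fun v hv => hb ⟨u, hv, hu⟩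
  obtain ⟨v, ⟨u, hvu, huc⟩, hav⟩ := h D hD hDdir c hDlub le_rfl
  exact ⟨u, hvu.mono hav le_rfl, huc⟩

lemma continuousPoset_of_forall_exists
    (h : ∀ x : α, ∃ s : Set α, s.Nonempty ∧ DirectedOn (· ≤ ·) s ∧ IsLUB s x ∧
      ∀ d ∈ s, WayBelow d x) : ContinuousPoset α := by
  intro x
  obtain ⟨s, hs, hsdir, hslub, hsx⟩ := h x
  refine ⟨hs.mono hsx, fun w₁ hw₁ w₂ hw₂ => ?_, fun d hd => hd.le_s10, fun u hu => ?_⟩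
  · obtain ⟨g₁, hg₁, hwg₁⟩ := hw₁ s hs hsdir x hslub le_rfl
    obtain ⟨g₂, hg₂, hwg₂⟩ := hw₂ s hs hsdir x hslub le_rfl
    obtain ⟨g, hg, hg₁g, hg₂g⟩ := hsdir g₁ hg₁ g₂ hg₂
    exact ⟨g, hsx g hg, hwg₁.trans hg₁g, hwg₂.trans hg₂g⟩
  · exact hslub.2 fun g hg => hu (hsx g hg)

lemma isOpen_setOf_wayBelow [TopologicalSpace α] [IsScott α univ] (hα : ContinuousPoset α)
    (a : α) : IsOpen {y | WayBelow a y} := by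
  rw [IsScott.isOpen_iff_isUpperSet_and_dirSupInaccOn (D := univ), dirSupInaccOn_univ]
  refine ⟨fun y y' hyy' hy => hy.mono le_rfl hyy', fun d hd hdir s hs hs' => ?_⟩
  obtain ⟨b, hab, hbs⟩ := hα.exists_wayBelow_wayBelow_s10 hs'
  obtain ⟨z, hz, hbz⟩ := hbs d hd hdir s hs le_rfl
  exact ⟨z, hz, hab.mono le_rfl hbz⟩

end Preorder

lemma wayBelow_bot [Preorder α] [OrderBot α] {b : α} : WayBelow ⊥ b :=
  fun _ ⟨z, hz⟩ _ _ _ _ => ⟨z, hz, bot_le⟩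

lemma WayBelow.sup [SemilatticeSup α] {a₁ a₂ b : α} (h₁ : WayBelow a₁ b) (h₂ : WayBelow a₂ b) :
    WayBelow (a₁ ⊔ a₂) b := by
  intro d hd hdir s hs hbs
  obtain ⟨z₁, hz₁, hz₁'⟩ := h₁ d hd hdir s hs hbs
  obtain ⟨z₂, hz₂, hz₂'⟩ := h₂ d hd hdir s hs hbs
  obtain ⟨z, hz, hz₁z, hz₂z⟩ := hdir z₁ hz₁ z₂ hz₂
  exact ⟨z, hz, sup_le (hz₁'.trans hz₁z) (hz₂'.trans hz₂z)⟩

lemma continuousPoset_iff_forall_isLUB [SemilatticeSup α] [OrderBot α] :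
    ContinuousPoset α ↔ ∀ x : α, IsLUB {d | WayBelow d x} x :=
  ⟨fun h x => (h x).2.2, fun h x =>
    ⟨⟨⊥, wayBelow_bot⟩, fun _ h₁ _ h₂ => ⟨_, h₁.sup h₂, le_sup_left, le_sup_right⟩, h x⟩⟩

lemma WayBelow.exists_finset_le_sup [CompleteLattice α] {a b : α} {s : Set α}
    (h : WayBelow a b) (hb : b ≤ sSup s) : ∃ t : Finset α, ↑t ⊆ s ∧ a ≤ t.sup id := by
  classical
  set D : Set α := (fun t : Finset α => t.sup id) '' {t | ↑t ⊆ s}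
  have hD : D.Nonempty := ⟨_, ∅, by simp, rfl⟩
  have hDdir : DirectedOn (· ≤ ·) D := by
    rintro _ ⟨t₁, ht₁, rfl⟩ _ ⟨t₂, ht₂, rfl⟩
    refine ⟨_, ⟨t₁ ∪ t₂, ?_, rfl⟩, Finset.sup_mono Finset.subset_union_left,
      Finset.sup_mono Finset.subset_union_right⟩
    simpa using union_subset ht₁ ht₂
  have hDlub : IsLUB D (sSup s) := by
    refine ⟨?_, fun u hu => sSup_le fun x hx => ?_⟩
    · rintro _ ⟨t, ht, rfl⟩
      exact Finset.sup_le fun x hx => le_sSup (ht hx)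
    · simpa using hu ⟨{x}, by simpa using hx, rfl⟩
  obtain ⟨_, ⟨t, ht, rfl⟩, hat⟩ := h D hD hDdir (sSup s) hDlub hb
  exact ⟨t, ht, hat⟩

end WayBelow

namespace TopologicalSpace.Closeds

section Topology

variable {X : Type*} [TopologicalSpace X]

lemma mem_finset_sup_id {t : Finset (Closeds X)} {x : X} :
    x ∈ t.sup id ↔ ∃ S ∈ t, x ∈ S := by
  rw [← SetLike.mem_coe, coe_finset_sup, Finset.sup_set_eq_biUnion]
  simp

lemma exists_mem_of_wayBelow_of_le_sSup {A B : Closeds X} {𝒯 : Set (Closeds X)} {a : X}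
    (h : WayBelow A B) (hB : B ≤ sSup 𝒯) (ha : a ∈ A) : ∃ T ∈ 𝒯, a ∈ T := by
  obtain ⟨t, ht, hAt⟩ := h.exists_finset_le_sup hB
  obtain ⟨T, hT, haT⟩ := mem_finset_sup_id.1 (hAt ha)
  exact ⟨T, ht hT, haT⟩

end Topology

variable {P : Type*} [PartialOrder P] [TopologicalSpace P] [IsScott P univ]

def Iic (x : P) : Closeds P := ⟨Set.Iic x, isClosed_Iic⟩

@[simp]
lemma mem_Iic {x y : P} : y ∈ Iic x ↔ y ≤ x := Iff.rfl

lemma isLowerSet (A : Closeds P) : IsLowerSet (A : Set P) :=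
  IsScott.isLowerSet_of_isClosed A.isClosed

lemma dirSupClosed (A : Closeds P) : DirSupClosed (A : Set P) :=
  IsScott.dirSupClosed_of_isClosed A.isClosed

lemma Iic_le_iff {x : P} {A : Closeds P} : Iic x ≤ A ↔ x ∈ A :=
  ⟨fun h => h le_rfl, fun hx _ hy => A.isLowerSet hy hx⟩

lemma Iic_le_Iic {x y : P} : Iic x ≤ Iic y ↔ x ≤ y := Iic_le_iff

lemma le_sSup_image_Iic (A : Closeds P) : A ≤ sSup (Iic '' A) :=
  fun _ ha => Iic_le_iff.1 (le_sSup (mem_image_of_mem Iic ha))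

lemma mem_sSup_image_Iic_of_isLUB {d : Set P} (hd : d.Nonempty) (hdir : DirectedOn (· ≤ ·) d)
    {s : P} (hs : IsLUB d s) : s ∈ sSup (Iic '' d) :=
  dirSupClosed _ (fun _ hz => Iic_le_iff.1 (le_sSup (mem_image_of_mem Iic hz))) hd hdir hs

lemma exists_le_of_wayBelow_Iic {g x : P} {s : Set P} (h : WayBelow (Iic g) (Iic x))
    (hx : x ∈ sSup (Iic '' s)) : ∃ y ∈ s, g ≤ y := by
  obtain ⟨_, ⟨y, hy, rfl⟩, hgy⟩ := exists_mem_of_wayBelow_of_le_sSup h (Iic_le_iff.2 hx) le_rfl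
  exact ⟨y, hy, hgy⟩

lemma wayBelow_of_wayBelow_Iic {g x : P} (h : WayBelow (Iic g) (Iic x)) : WayBelow g x := by
  intro d hd hdir s hs hxs
  exact exists_le_of_wayBelow_Iic h <|
    (sSup (Iic '' d)).isLowerSet hxs (mem_sSup_image_Iic_of_isLUB hd hdir hs)

end TopologicalSpace.Closeds

namespace ContinuousPoset

open TopologicalSpace.Closeds

variable {P : Type*} [PartialOrder P] [TopologicalSpace P] [IsScott P univ]

section Closeds

variable (hP : ContinuousPoset P)
include hP

lemma exists_mem_of_le_sSup {C : Closeds P} {𝒞 : Set (Closeds P)} {w x : P} (hx : x ∈ C)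
    (hw : WayBelow w x) (hC : C ≤ sSup 𝒞) : ∃ C' ∈ 𝒞, w ∈ C' := by
  obtain ⟨v, hwv, hvx⟩ := hP.exists_wayBelow_wayBelow_s10 hw
  have hx' : x ∈ closure (⋃₀ ((↑) '' 𝒞) : Set P) := by rw [← coe_sSup]; exact hC hx
  obtain ⟨y, hvy, _, ⟨C', hC', rfl⟩, hyC'⟩ :=
    mem_closure_iff.1 hx' _ (isOpen_setOf_wayBelow hP v) hvx
  exact ⟨C', hC', C'.isLowerSet (hwv.le_s10.trans hvy.le_s10) hyC'⟩

lemma Iic_wayBelow {C : Closeds P} {w x : P} (hx : x ∈ C) (hw : WayBelow w x) :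
    WayBelow (Closeds.Iic w) C := fun 𝒞 _ _ S hS hCS => by
  obtain ⟨C', hC', hwC'⟩ := hP.exists_mem_of_le_sSup hx hw (hCS.trans hS.sSup_eq.ge)
  exact ⟨C', hC', Iic_le_iff.2 hwC'⟩

theorem closeds : ContinuousPoset (Closeds P) := by
  refine continuousPoset_iff_forall_isLUB.2 fun C => ⟨fun D hD => hD.le_s10, fun u hu x hx => ?_⟩
  obtain ⟨hne, hdir, hlub⟩ := hP x
  exact u.dirSupClosed (fun w hw => Iic_le_iff.1 (hu (hP.Iic_wayBelow hx hw))) hne hdir hlub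

end Closeds

section OfCloseds

variable (hΓ : ContinuousPoset (Closeds P)) (x : P)
include hΓ

lemma exists_wayBelow_Iic_le {A : Closeds P} {a : P} (hA : WayBelow A (Closeds.Iic x))
    (ha : a ∈ A) : ∃ g, WayBelow (Closeds.Iic g) (Closeds.Iic x) ∧ a ≤ g := by
  obtain ⟨B, hAB, hBx⟩ := hΓ.exists_wayBelow_wayBelow_s10 hA
  obtain ⟨_, ⟨b, hb, rfl⟩, hab⟩ :=
    Closeds.exists_mem_of_wayBelow_of_le_sSup hAB B.le_sSup_image_Iic ha
  exact ⟨b, hBx.mono (Iic_le_iff.2 hb) le_rfl, hab⟩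

lemma mem_sSup_image_Iic_setOf_wayBelow :
    x ∈ sSup (Closeds.Iic '' {g | WayBelow (Closeds.Iic g) (Closeds.Iic x)}) := by
  refine Iic_le_iff.1 ((hΓ (Closeds.Iic x)).2.2.2 fun A hA a ha => ?_)
  obtain ⟨g, hg, hag⟩ := hΓ.exists_wayBelow_Iic_le x hA ha
  exact le_sSup (mem_image_of_mem Closeds.Iic hg) (Closeds.mem_Iic.2 hag)

lemma directedOn_setOf_wayBelow_Iic :
    DirectedOn (· ≤ ·) {g | WayBelow (Closeds.Iic g) (Closeds.Iic x)} := by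
  intro g₁ hg₁ g₂ hg₂
  by_contra! hG
  have hx := hΓ.mem_sSup_image_Iic_setOf_wayBelow x
  set G := {g | WayBelow (Closeds.Iic g) (Closeds.Iic x)}
  have hsplit : G = {g ∈ G | ¬g₁ ≤ g} ∪ {g ∈ G | ¬g₂ ≤ g} := by
    ext g
    by_cases h : g₁ ≤ g <;> simp_all
  rw [hsplit, image_union, sSup_union, ← SetLike.mem_coe, coe_sup] at hx
  rcases hx with hx | hx
  · obtain ⟨g, ⟨-, hg⟩, hg₁g⟩ := exists_le_of_wayBelow_Iic hg₁ hx
    exact hg hg₁g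
  · obtain ⟨g, ⟨-, hg⟩, hg₂g⟩ := exists_le_of_wayBelow_Iic hg₂ hx
    exact hg hg₂g

theorem of_closeds : ContinuousPoset P := by
  refine continuousPoset_of_forall_exists fun x => ?_
  have hx := hΓ.mem_sSup_image_Iic_setOf_wayBelow x
  refine ⟨{g | WayBelow (Closeds.Iic g) (Closeds.Iic x)}, ?_, hΓ.directedOn_setOf_wayBelow_Iic x,
    ⟨?_, ?_⟩, fun _ => wayBelow_of_wayBelow_Iic⟩
  · by_contra! hG
    rw [hG, image_empty, sSup_empty] at hx
    exact hx
  · exact fun g hg => Iic_le_Iic.1 hg.le_s10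
  · exact fun u hu =>
      Closeds.mem_Iic.1 (sSup_le (forall_mem_image.2 fun g hg => Iic_le_Iic.2 (hu hg)) hx)

end OfCloseds

end ContinuousPoset

/-- A poset `P` is continuous iff the complete lattice `Γ(P)` of Scott closed subsets of `P`
is a continuous lattice. -/
theorem continuousPoset_iff_continuous_closeds
    {P : Type*} [PartialOrder P] [TopologicalSpace P] [Topology.IsScott P Set.univ] :
    ContinuousPoset P ↔ ContinuousPoset (TopologicalSpace.Closeds P) :=
  ⟨ContinuousPoset.closeds, ContinuousPoset.of_closeds⟩
end
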